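/- Let K be a positive natural number, and let λs > 0 and λn > 0 be real numbers. For observations s : Fin K → ℕ with total s_tot = ∑_k s_k, define the two joint Poisson likelihoods L1 = ∏_k ((λs+λn)^{s_k} · exp(-(λs+λn)) / (s_k)!) and L0 = ∏_k (λn^{s_k} · exp(-λn) / (s_k)!). Then L1 ≥ L0 if and only if (s_tot : ℝ) ≥ K·λs / ln((λs+λn)/λn). (This is the λn > 0 case of Theorem 1: the symbol-by-symbol ML decision of the L-ML detector reduces to comparing the total molecule count with the adaptive threshold K·λs / ln((λs+λn)/λn).) -/
import Mathlib


open Finset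

/-- **Theorem 1 of the paper, case `λn > 0`.**  For `K` receivers with Poisson
observations `s k`, the joint likelihood under hypothesis `W = 1` (per-receiver mean
`λs + λn`) is at least the joint likelihood under `W = 0` (per-receiver mean `λn`)
iff the total count `∑ k, s k` is at least the adaptive threshold
`K * λs / ln((λs + λn) / λn)`. -/
theorem lML_threshold_rule (K : ℕ) (hK : 0 < K) (lams lamn : ℝ)
    (hlams : 0 < lams) (hlamn : 0 < lamn) (s : Fin K → ℕ) :
    (∏ k, ((lams + lamn) ^ (s k) * Real.exp (-(lams + lamn)) / (Nat.factorial (s k)))) ≥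
      (∏ k, (lamn ^ (s k) * Real.exp (-lamn) / (Nat.factorial (s k)))) ↔
    ((∑ k, s k : ℕ) : ℝ) ≥ (K : ℝ) * lams / Real.log ((lams + lamn) / lamn) := by
  set a : ℝ := lams + lamn with ha
  have haa : (0:ℝ) < a := by positivity
  have hr : 1 < a / lamn := (one_lt_div hlamn).2 (by linarith)
  have hlog : 0 < Real.log (a / lamn) := Real.log_pos hr
  set S : ℕ := ∑ k, s k with hS
  have hF : (0:ℝ) < ∏ k, (Nat.factorial (s k) : ℝ) := by
    apply Finset.prod_pos
    intro i _
    exact_mod_cast Nat.factorial_pos (s i)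
  have hprod : ∀ c : ℝ,
      (∏ k, (c ^ (s k) * Real.exp (-c) / (Nat.factorial (s k)) : ℝ))
        = c ^ S * Real.exp (-(K * c)) / ∏ k, (Nat.factorial (s k) : ℝ) := by
    intro c
    rw [prod_div_distrib, prod_mul_distrib, prod_pow_eq_pow_sum, prod_const, ← hS]
    congr 2
    rw [← Real.exp_nat_mul, Finset.card_univ, Fintype.card_fin]
    ring_nf
  rw [hprod, hprod, ge_iff_le, div_le_div_iff_of_pos_right hF]
  have h1 : 0 < lamn ^ S * Real.exp (-(K * lamn)) := by positivity
  have h2 : 0 < a ^ S * Real.exp (-(K * a)) := by positivity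
  rw [← Real.log_le_log_iff h1 h2, Real.log_mul (by positivity) (Real.exp_ne_zero _),
      Real.log_mul (by positivity) (Real.exp_ne_zero _), Real.log_exp, Real.log_exp,
      Real.log_pow, Real.log_pow]
  have hld : Real.log (a / lamn) = Real.log a - Real.log lamn :=
    Real.log_div (ne_of_gt haa) (ne_of_gt hlamn)
  rw [ge_iff_le, div_le_iff₀ hlog]
  constructor <;> intro h <;> nlinarith [h, hld]
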